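/- Let A be an n×n real matrix with nonnegative entries, and let u, v be n×1 real vectors with strictly positive entries such that u = A u + v. Then the maximum row-sum norm of (I - A)^{-1} is bounded by (max_ℓ u_ℓ)/(min_ℓ v_ℓ), i.e. for every row k, the sum of the entries of (I - A)^{-1} in row k is at most (max_ℓ u_ℓ)/(min_ℓ v_ℓ). -/

import Mathlib

/-! If `(1 - A) *ᵥ y = x` with `|x| ≤ 1`, let `k₀` maximise `c = |y l| / u l`. Since `A ≥ 0`, row `k₀`
of `y = A *ᵥ y + x` gives `c * u k₀ ≤ c * (A *ᵥ u) k₀ + 1 = c * (u k₀ - v k₀) + 1`, so `c ≤ 1 / v k₀`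
and `|y k| ≤ u k / v k₀ ≤ (max u) / (min v)`. Taking for `x` the sign pattern of row `k` of
`(1 - A)⁻¹` turns `y k` into the absolute sum of that row. -/

open Finset Matrix

section NonnegMatrix

variable {ι : Type*} [Fintype ι] {A : Matrix ι ι ℝ}

theorem abs_mulVec_le_mulVec_of_nonneg (hA : ∀ i j, 0 ≤ A i j) {y w : ι → ℝ}
    (hyw : ∀ l, |y l| ≤ w l) (k : ι) : |(A *ᵥ y) k| ≤ (A *ᵥ w) k :=
  calc |(A *ᵥ y) k| = |∑ l, A k l * y l| := rfl
    _ ≤ ∑ l, |A k l * y l| := abs_sum_le_sum_abs _ _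
    _ ≤ ∑ l, A k l * w l := sum_le_sum fun l _ => by
        rw [abs_mul, abs_of_nonneg (hA k l)]
        exact mul_le_mul_of_nonneg_left (hyw l) (hA k l)

variable [DecidableEq ι] {u v x y : ι → ℝ}

theorem exists_abs_le_div_of_one_sub_mulVec_eq [Nonempty ι] (hA : ∀ i j, 0 ≤ A i j)
    (hu : ∀ i, 0 < u i) (hv : ∀ i, 0 < v i) (huv : u = A *ᵥ u + v)
    (hx : ∀ l, |x l| ≤ 1) (hxy : (1 - A) *ᵥ y = x) :
    ∃ k₀, ∀ l, |y l| ≤ u l / v k₀ := by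
  obtain ⟨k₀, hk₀⟩ := Finite.exists_max fun l => |y l| / u l
  set c := |y k₀| / u k₀
  have hyc : ∀ l, |y l| ≤ c * u l := fun l => (div_le_iff₀ (hu l)).mp (hk₀ l)
  have hy : y k₀ = (A *ᵥ y) k₀ + x k₀ := by
    have := congrFun hxy k₀
    simp only [sub_mulVec, one_mulVec, Pi.sub_apply] at this
    linarith
  have hAu : (A *ᵥ (c • u)) k₀ = c * (u k₀ - v k₀) := by
    rw [mulVec_smul, Pi.smul_apply, smul_eq_mul, congrFun huv k₀, Pi.add_apply]
    ring
  have hcv : c * v k₀ ≤ 1 :=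
    calc c * v k₀ = |y k₀| - c * (u k₀ - v k₀) := by
          linear_combination (div_mul_cancel₀ (|y k₀|) (hu k₀).ne')
      _ ≤ |(A *ᵥ y) k₀| + |x k₀| - c * (u k₀ - v k₀) := by
          rw [hy]; gcongr; exact abs_add_le _ _
      _ ≤ 1 := by
          have := abs_mulVec_le_mulVec_of_nonneg hA (w := c • u) hyc k₀
          linarith [hx k₀]
  refine ⟨k₀, fun l => (hyc l).trans ?_⟩
  rw [mul_comm, le_div_iff₀ (hv k₀), mul_assoc]
  exact mul_le_of_le_one_right (hu l).le hcv

theorem abs_le_iSup_div_iInf_of_one_sub_mulVec_eq (hA : ∀ i j, 0 ≤ A i j)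
    (hu : ∀ i, 0 < u i) (hv : ∀ i, 0 < v i) (huv : u = A *ᵥ u + v)
    (hx : ∀ l, |x l| ≤ 1) (hxy : (1 - A) *ᵥ y = x) (k : ι) :
    |y k| ≤ (⨆ i, u i) / (⨅ i, v i) := by
  have : Nonempty ι := ⟨k⟩
  obtain ⟨k₀, hk₀⟩ := exists_abs_le_div_of_one_sub_mulVec_eq hA hu hv huv hx hxy
  obtain ⟨i₀, hi₀⟩ := exists_eq_ciInf_of_finite (f := v)
  have huk : u k ≤ ⨆ i, u i := le_ciSup (Finite.bddAbove_range u) k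
  calc |y k| ≤ u k / v k₀ := hk₀ k
    _ ≤ (⨆ i, u i) / (⨅ i, v i) :=
        div_le_div₀ ((hu k).le.trans huk) huk (hi₀ ▸ hv i₀)
          (ciInf_le (Finite.bddBelow_range v) k₀)

end NonnegMatrix

theorem stmt2_general {n : ℕ} (A : Matrix (Fin n) (Fin n) ℝ)
    (u v : Fin n → ℝ)
    (hA : ∀ i j, 0 ≤ A i j) (hu : ∀ i, 0 < u i) (hv : ∀ i, 0 < v i)
    (huv : u = A.mulVec u + v) :
    ∀ k, ∑ l, |(1 - A)⁻¹ k l| ≤ (⨆ i, u i) / (⨅ i, v i) := by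
  intro k
  by_cases h : IsUnit (1 - A).det
  · set B := (1 - A)⁻¹
    let x : Fin n → ℝ := fun l => SignType.sign (B k l)
    have hx : ∀ l, |x l| ≤ 1 := fun l => by
      cases h : SignType.sign (B k l) <;> simp [x, h]
    have hxy : (1 - A) *ᵥ (B *ᵥ x) = x := by
      rw [mulVec_mulVec, mul_nonsing_inv _ h, one_mulVec]
    calc ∑ l, |B k l| = (B *ᵥ x) k := sum_congr rfl fun l _ => (self_mul_sign _).symm
      _ ≤ |(B *ᵥ x) k| := le_abs_self _
      _ ≤ (⨆ i, u i) / (⨅ i, v i) :=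
          abs_le_iSup_div_iInf_of_one_sub_mulVec_eq hA hu hv huv hx hxy k
  · have : Nonempty (Fin n) := ⟨k⟩
    obtain ⟨i₀, hi₀⟩ := exists_eq_ciInf_of_finite (f := v)
    rw [nonsing_inv_apply_not_isUnit _ h, ← hi₀]
    simpa using div_nonneg ((hu k).le.trans (le_ciSup (Finite.bddAbove_range u) k)) (hv i₀).le

theorem stmt2 {n : ℕ} (hn : 0 < n) (A : Matrix (Fin n) (Fin n) ℝ)
    (u v : Fin n → ℝ)
    (hA : ∀ i j, 0 ≤ A i j) (hu : ∀ i, 0 < u i) (hv : ∀ i, 0 < v i)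
    (huv : u = A.mulVec u + v) :
    ∀ k, ∑ l, |(1 - A)⁻¹ k l| ≤ (⨆ i, u i) / (⨅ i, v i) :=
  stmt2_general A u v hA hu hv huv
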